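/- arXiv:2106.14446 — 6 statements merged into one kernel-verified Lean document; each statement's English description precedes it below -/
import Mathlib

section
/- Let X be a finite set of items all of whose densities are at least ρ ≥ 0, and suppose s(X) > B − s_e for some item e ∉ X with density ρ_e ≤ ρ and size s_e ≤ B. Then for any finite set T of items disjoint from X with s(T) ≤ B − s_e and all densities in T at most ρ, we have v(T) ≤ v(X). -/
section DensityBounds

variable {ι K : Type*} [Field K] [LinearOrder K] [IsStrictOrderedRing K]
  {s v : ι → K} {ρ : K} {T : Finset ι}

theorem Finset.sum_le_mul_sum_of_div_le (hs : ∀ j ∈ T, 0 < s j)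
    (hρ : ∀ j ∈ T, v j / s j ≤ ρ) : ∑ j ∈ T, v j ≤ ρ * ∑ j ∈ T, s j := by
  rw [Finset.mul_sum]
  exact Finset.sum_le_sum fun j hj => (div_le_iff₀ (hs j hj)).mp (hρ j hj)

theorem Finset.mul_sum_le_sum_of_le_div (hs : ∀ j ∈ T, 0 < s j)
    (hρ : ∀ j ∈ T, ρ ≤ v j / s j) : ρ * ∑ j ∈ T, s j ≤ ∑ j ∈ T, v j := by
  rw [Finset.mul_sum]
  exact Finset.sum_le_sum fun j hj => (le_div_iff₀ (hs j hj)).mp (hρ j hj)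

end DensityBounds

theorem stmt_5_general {ι : Type*} (s v : ι → ℝ) (ρ B : ℝ) (hρ : 0 ≤ ρ)
    (X : Finset ι)
    (hs : ∀ j, 0 < s j)
    (hXdense : ∀ j ∈ X, ρ ≤ v j / s j)
    (e : ι)
    (hXsize : ∑ j ∈ X, s j > B - s e)
    (T : Finset ι)
    (hTsize : ∑ j ∈ T, s j ≤ B - s e)
    (hTdense : ∀ j ∈ T, v j / s j ≤ ρ) :
    ∑ j ∈ T, v j ≤ ∑ j ∈ X, v j :=
  calc ∑ j ∈ T, v j ≤ ρ * ∑ j ∈ T, s j := T.sum_le_mul_sum_of_div_le (fun j _ => hs j) hTdense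
    _ ≤ ρ * ∑ j ∈ X, s j := mul_le_mul_of_nonneg_left (hTsize.trans hXsize.le) hρ
    _ ≤ ∑ j ∈ X, v j := X.mul_sum_le_sum_of_le_div (fun j _ => hs j) hXdense

/-- If all densities in `X` are at least `ρ ≥ 0`, `s(X) > B − s_e` for an item
`e ∉ X` with `ρ_e ≤ ρ` and `s_e ≤ B`, then for any finite `T` disjoint from `X` with
`s(T) ≤ B − s_e` and all densities in `T` at most `ρ`, `v(T) ≤ v(X)`. -/
theorem stmt_5 {ι : Type*} (s v : ι → ℝ) (ρ B : ℝ) (hρ : 0 ≤ ρ) (hB : 0 < B)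
    (X : Finset ι)
    (hs : ∀ j, 0 < s j) (hv : ∀ j, 0 ≤ v j)
    (hXdense : ∀ j ∈ X, ρ ≤ v j / s j)
    (e : ι) (heX : e ∉ X) (hρe : v e / s e ≤ ρ) (hse : s e ≤ B)
    (hXsize : ∑ j ∈ X, s j > B - s e)
    (T : Finset ι) (hTX : Disjoint T X)
    (hTsize : ∑ j ∈ T, s j ≤ B - s e)
    (hTdense : ∀ j ∈ T, v j / s j ≤ ρ) :
    ∑ j ∈ T, v j ≤ ∑ j ∈ X, v j :=
  stmt_5_general s v ρ B hρ X hs hXdense e hXsize T hTsize hTdense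
end

section
/- Let X, T₁, T₂ be pairwise disjoint finite sets of items, B > 0 a real. Suppose: (a) v(X) ≥ v(T₁); (b) every item of X has density at least every item of T₂; (c) s(X) + s_e > B for all e ∈ T₂; (d) s(T₁) + s(T₂) ≤ B. Then for every e ∈ T₂, 2·v(X) ≥ v(T₁) + v(T₂ \ {e}) = v((T₁ ∪ T₂) \ {e}). -/
/-!
Let `ρ` be the largest density in `T₂ \ {e}`. By (c) and (d), `s(T₂ \ {e}) ≤ B - s_e < s(X)`,
and by (b) every item of `X` has density at least `ρ`, so
`v(T₂ \ {e}) ≤ ρ · s(T₂ \ {e}) ≤ ρ · s(X) ≤ v(X)`. Adding (a) gives the bound.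
-/

namespace Finset

variable {ι : Type*} {s v : ι → ℝ}

theorem sum_le_mul_sum_of_div_le_s6 {A : Finset ι} {ρ : ℝ} (hs : ∀ j ∈ A, 0 < s j)
    (hρ : ∀ j ∈ A, v j / s j ≤ ρ) : ∑ j ∈ A, v j ≤ ρ * ∑ j ∈ A, s j := by
  rw [mul_sum]
  exact sum_le_sum fun j hj => (div_le_iff₀ (hs j hj)).1 (hρ j hj)

theorem mul_sum_le_sum_of_le_div_s6 {C : Finset ι} {ρ : ℝ} (hs : ∀ j ∈ C, 0 < s j)
    (hρ : ∀ j ∈ C, ρ ≤ v j / s j) : ρ * ∑ j ∈ C, s j ≤ ∑ j ∈ C, v j := by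
  rw [mul_sum]
  exact sum_le_sum fun j hj => (le_div_iff₀ (hs j hj)).1 (hρ j hj)

theorem sum_le_sum_of_size_le_of_div_le_div {A C : Finset ι} (hs : ∀ j, 0 < s j)
    (hv : ∀ j, 0 ≤ v j) (hdens : ∀ a ∈ A, ∀ c ∈ C, v a / s a ≤ v c / s c)
    (hsize : ∑ j ∈ A, s j ≤ ∑ j ∈ C, s j) : ∑ j ∈ A, v j ≤ ∑ j ∈ C, v j := by
  rcases A.eq_empty_or_nonempty with rfl | hA
  · simpa using sum_nonneg fun j _ => hv j
  obtain ⟨m, hm, hmax⟩ := A.exists_max_image (fun j => v j / s j) hA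
  have hρ : 0 ≤ v m / s m := div_nonneg (hv m) (hs m).le
  calc ∑ j ∈ A, v j ≤ v m / s m * ∑ j ∈ A, s j :=
        sum_le_mul_sum_of_div_le_s6 (fun j _ => hs j) hmax
    _ ≤ v m / s m * ∑ j ∈ C, s j := mul_le_mul_of_nonneg_left hsize hρ
    _ ≤ ∑ j ∈ C, v j := mul_sum_le_sum_of_le_div_s6 (fun j _ => hs j) (hdens m hm)

end Finset

open Finset in
theorem stmt_6_general {ι : Type*} [DecidableEq ι] (s v : ι → ℝ) (B : ℝ)
    (X T₁ T₂ : Finset ι)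
    (hd3 : Disjoint T₁ T₂)
    (hs : ∀ j, 0 < s j) (hv : ∀ j, 0 ≤ v j)
    (ha : ∑ j ∈ X, v j ≥ ∑ j ∈ T₁, v j)
    (hb : ∀ j ∈ X, ∀ e ∈ T₂, v e / s e ≤ v j / s j)
    (hc : ∀ e ∈ T₂, (∑ j ∈ X, s j) + s e > B)
    (hd : (∑ j ∈ T₁, s j) + (∑ j ∈ T₂, s j) ≤ B) :
    ∀ e ∈ T₂,
      2 * ∑ j ∈ X, v j ≥ (∑ j ∈ T₁, v j) + ∑ j ∈ T₂.erase e, v j ∧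
      (∑ j ∈ T₁, v j) + (∑ j ∈ T₂.erase e, v j) = ∑ j ∈ (T₁ ∪ T₂).erase e, v j := by
  intro e he
  have hsize : ∑ j ∈ T₂.erase e, s j ≤ ∑ j ∈ X, s j := by
    have := sum_erase_add T₂ s he
    have := sum_nonneg fun j (_ : j ∈ T₁) => (hs j).le
    linarith [hc e he]
  have hT₂X : ∑ j ∈ T₂.erase e, v j ≤ ∑ j ∈ X, v j :=
    sum_le_sum_of_size_le_of_div_le_div hs hv
      (fun a haT₂ j hjX => hb j hjX a (mem_of_mem_erase haT₂)) hsize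
  refine ⟨by linarith, ?_⟩
  rw [erase_union_distrib, erase_eq_of_notMem (disjoint_right.mp hd3 he),
    sum_union (disjoint_of_subset_right (erase_subset e T₂) hd3)]

/-- Key 1/2-EF1 inequality: under (a)–(d) below, for every `e ∈ T₂`,
`2·v(X) ≥ v(T₁) + v(T₂ \ {e}) = v((T₁ ∪ T₂) \ {e})`. -/
theorem stmt_6 {ι : Type*} [DecidableEq ι] (s v : ι → ℝ) (B : ℝ) (hB : 0 < B)
    (X T₁ T₂ : Finset ι)
    (hd1 : Disjoint X T₁) (hd2 : Disjoint X T₂) (hd3 : Disjoint T₁ T₂)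
    (hs : ∀ j, 0 < s j) (hv : ∀ j, 0 ≤ v j)
    (ha : ∑ j ∈ X, v j ≥ ∑ j ∈ T₁, v j)
    (hb : ∀ j ∈ X, ∀ e ∈ T₂, v e / s e ≤ v j / s j)
    (hc : ∀ e ∈ T₂, (∑ j ∈ X, s j) + s e > B)
    (hd : (∑ j ∈ T₁, s j) + (∑ j ∈ T₂, s j) ≤ B) :
    ∀ e ∈ T₂,
      2 * ∑ j ∈ X, v j ≥ (∑ j ∈ T₁, v j) + ∑ j ∈ T₂.erase e, v j ∧
      (∑ j ∈ T₁, v j) + (∑ j ∈ T₂.erase e, v j) = ∑ j ∈ (T₁ ∪ T₂).erase e, v j :=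
  stmt_6_general s v B X T₁ T₂ hd3 hs hv ha hb hc hd
end

section
/- Consider n agents with budgets B_1 ≤ B_2 ≤ ... ≤ B_n and n bundles X_1,...,X_n with level values l(1),...,l(n) satisfying the level invariant (i < j implies l(i) ≤ l(j) ≤ j) and the size invariant (B_{l(i)−1} < s(X_i) ≤ B_{l(i)}, with B_0 = −∞). If for some index ℓ we have s(X_ℓ) + s_g > B_ℓ (for an unallocated item g), ℓ is the largest index with level l(ℓ), and l(ℓ) = ℓ, then there is no permutation σ of {1,...,n} such that s(X_σ⁻¹(i)) + (if σ⁻¹(i)=ℓ then s_g else 0) ≤ B_i for all i; i.e., the configuration {X_1,...,X_ℓ + g,...,X_n} is not feasible. -/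
/-!
Every bundle from `ℓ` on is too large for the agents `0, …, ℓ`: bundle `ℓ` together with `g`
by assumption, and every later bundle because its level lies strictly above `ℓ`, so its size
exceeds `B ℓ` by the size invariant. A permutation would have to place these `n - ℓ` bundles
with the `n - ℓ - 1` agents after `ℓ`, which is impossible.
-/

open Finset

theorem Fin.exists_le_apply_le_of_injective {n : ℕ} {f : Fin n → Fin n}
    (hf : Function.Injective f) (a : Fin n) : ∃ i, a ≤ i ∧ f i ≤ a := by
  by_contra! h
  have hcard := card_le_card_of_injOn f (fun i hi ↦ mem_Ioi.2 (h i (mem_Ici.1 hi)))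
    hf.injOn
  rw [Fin.card_Ici, Fin.card_Ioi] at hcard
  omega

theorem budget_lt_of_lt_level {n : ℕ} {B : Fin n → ℝ} (hB : Monotone B) {l : Fin n → Fin n}
    {x : Fin n → ℝ}
    (hlow : ∀ i, (0 : ℕ) < (l i : ℕ) →
      B ⟨(l i : ℕ) - 1, Nat.lt_of_le_of_lt (Nat.sub_le _ _) (l i).isLt⟩ < x i)
    {i k : Fin n} (hk : k < l i) : B k < x i :=
  (hB (Fin.le_def.2 (Nat.le_sub_one_of_lt hk))).trans_lt (hlow i (by omega))

theorem stmt_7_general {ι : Type*} {n : ℕ} (s : ι → ℝ)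
    (B : Fin n → ℝ) (hB : Monotone B)
    (X : Fin n → Finset ι) (l : Fin n → Fin n)
    (hlev : ∀ i j : Fin n, i ≤ j → l i ≤ l j ∧ l j ≤ j)
    (hlow : ∀ i, (0 : ℕ) < (l i : ℕ) → B ⟨(l i : ℕ) - 1, Nat.lt_of_le_of_lt (Nat.sub_le _ _) (l i).isLt⟩ < ∑ j ∈ X i, s j)
    (ℓ : Fin n) (g : ι)
    (hg : (∑ j ∈ X ℓ, s j) + s g > B ℓ)
    (hlargest : ∀ j : Fin n, ℓ < j → l j ≠ l ℓ)
    (hll : l ℓ = ℓ) :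
    ¬ ∃ σ : Equiv.Perm (Fin n), ∀ i : Fin n,
      (∑ j ∈ X (σ.symm i), s j) + (if σ.symm i = ℓ then s g else 0) ≤ B i := by
  rintro ⟨σ, hσ⟩
  have hoverload : ∀ i, ℓ ≤ i → B ℓ < (∑ j ∈ X i, s j) + (if i = ℓ then s g else 0) := by
    intro i hi
    rcases hi.eq_or_lt with rfl | hi
    · simpa using hg
    · have hlevel : ℓ < l i :=
        (hll ▸ (hlev ℓ i hi.le).1).lt_of_ne (hll ▸ (hlargest i hi).symm)
      simpa [hi.ne'] using budget_lt_of_lt_level hB hlow hlevel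
  obtain ⟨i, hℓi, hσi⟩ := Fin.exists_le_apply_le_of_injective σ.injective ℓ
  have hfit := hσ (σ i)
  rw [σ.symm_apply_apply] at hfit
  exact ((hoverload i hℓi).trans_le (hfit.trans (hB hσi))).false

/-- Under the level and size invariants, if `s(X_ℓ) + s_g > B_ℓ`, `ℓ` is the
largest index with level `l(ℓ)`, and `l(ℓ) = ℓ`, then the configuration
`{X_1, …, X_ℓ + g, …, X_n}` is not feasible (agents are 0-indexed). -/
theorem stmt_7 {ι : Type*} {n : ℕ} (s : ι → ℝ) (hs : ∀ j, 0 < s j)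
    (B : Fin n → ℝ) (hB : Monotone B)
    (X : Fin n → Finset ι) (l : Fin n → Fin n)
    (hlev : ∀ i j : Fin n, i ≤ j → l i ≤ l j ∧ l j ≤ j)
    (hup : ∀ i, ∑ j ∈ X i, s j ≤ B (l i))
    (hlow : ∀ i, (0 : ℕ) < (l i : ℕ) → B ⟨(l i : ℕ) - 1, Nat.lt_of_le_of_lt (Nat.sub_le _ _) (l i).isLt⟩ < ∑ j ∈ X i, s j)
    (ℓ : Fin n) (g : ι)
    (hg : (∑ j ∈ X ℓ, s j) + s g > B ℓ)
    (hlargest : ∀ j : Fin n, ℓ < j → l j ≠ l ℓ)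
    (hll : l ℓ = ℓ) :
    ¬ ∃ σ : Equiv.Perm (Fin n), ∀ i : Fin n,
      (∑ j ∈ X (σ.symm i), s j) + (if σ.symm i = ℓ then s g else 0) ≤ B i :=
  stmt_7_general s B hB X l hlev hlow ℓ g hg hlargest hll
end

section
/- In an instance with n agents having identical additive valuation v over items, identical budget B, where the allocation (X_1,...,X_n) is built by repeatedly giving the densest feasible unallocated item to an agent whose current bundle has minimum value: at every step of this process, for any two agents i, j, either X_j = ∅ or there exists g ∈ X_j with v(X_i) ≥ v(X_j \ {g}). -/
/-!
Adding an item only raises the value of the bundle that receives it, so every EF1 comparison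
against an unchanged bundle survives. For the enlarged bundle `insert g (X k)` the new item itself
is the witness: removing it leaves `X k`, which was of minimum value and so is worth no more than
any bundle, before or after the step.
-/

open Finset Function

section

variable {ι κ M : Type*} [DecidableEq ι] [AddCommMonoid M] [Preorder M]

def IsEF1 (v : ι → M) (X : κ → Finset ι) : Prop :=
  ∀ i j, X j = ∅ ∨ ∃ g ∈ X j, ∑ e ∈ (X j).erase g, v e ≤ ∑ e ∈ X i, v e

variable [DecidableEq κ] [AddLeftMono M] {v : ι → M} {X : κ → Finset ι} {k : κ}
  {g : ι}

theorem sum_le_sum_update_insert (hg : 0 ≤ v g) (m : κ) :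
    ∑ e ∈ X m, v e ≤ ∑ e ∈ update X k (insert g (X k)) m, v e := by
  refine sum_le_sum_of_subset_of_nonneg ?_ fun e _ he ↦ ?_
  · rcases eq_or_ne m k with rfl | hmk
    · simpa only [update_self] using subset_insert g (X m)
    · rw [update_of_ne hmk]
  · rcases eq_or_ne m k with rfl | hmk
    · obtain rfl : e = g := by simp_all
      exact hg
    · simp_all

theorem IsEF1.update_insert_of_forall_le (hX : IsEF1 v X)
    (hmin : ∀ i, ∑ e ∈ X k, v e ≤ ∑ e ∈ X i, v e) (hg : 0 ≤ v g) (hgk : g ∉ X k) :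
    IsEF1 v (update X k (insert g (X k))) := by
  intro i j
  have hgrow := sum_le_sum_update_insert (X := X) (k := k) hg i
  rcases eq_or_ne j k with rfl | hjk
  · refine .inr ⟨g, by simp, ?_⟩
    rw [update_self, erase_insert hgk]
    exact (hmin i).trans hgrow
  · rw [update_of_ne hjk]
    exact (hX i j).imp_right fun ⟨e, he, hle⟩ ↦ ⟨e, he, hle.trans hgrow⟩

end

/-- Greedy invariant: if the allocation `(X_1, …, X_n)` satisfies the
pairwise-EF1 property and an item `g` (not yet allocated) is added to a bundle `X_k`
of minimum value, then the resulting allocation also satisfies pairwise EF1. -/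
theorem stmt_10 {ι : Type*} [DecidableEq ι] {n : ℕ} (v : ι → ℝ) (hv : ∀ j, 0 ≤ v j)
    (X : Fin n → Finset ι)
    (hEF1 : ∀ i j : Fin n, X j = ∅ ∨
      ∃ g ∈ X j, ∑ e ∈ X i, v e ≥ ∑ e ∈ (X j).erase g, v e)
    (k : Fin n) (hmin : ∀ i : Fin n, ∑ e ∈ X k, v e ≤ ∑ e ∈ X i, v e)
    (g : ι) (hg : ∀ i : Fin n, g ∉ X i) :
    ∀ i j : Fin n,
      Function.update X k (insert g (X k)) j = ∅ ∨
      ∃ e ∈ Function.update X k (insert g (X k)) j,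
        ∑ a ∈ Function.update X k (insert g (X k)) i, v a ≥
          ∑ a ∈ (Function.update X k (insert g (X k)) j).erase e, v a :=
  IsEF1.update_insert_of_forall_le (v := v) (X := X) hEF1 hmin (hv g) (hg k)
end

section
/- Let (X_1,...,X_n) be an allocation of items satisfying: for all i, j, there exists g ∈ X_j with v(X_i) ≥ v(X_j \ {g}) (pairwise EF1), where v is additive. If item g* is added to bundle X_k where v(X_k) = min_i v(X_i), then the new allocation (X_1,...,X_k ∪ {g*},...,X_n) is also pairwise EF1. -/
/-!
Adding an item only enlarges bundles, so every bundle is still worth at least the old minimum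
`v(X_k)`. Envy towards a bundle other than `X_k` is therefore still removed by the old witness,
and envy towards `X_k ∪ {g*}` is removed by `g*` itself, since what remains is worth at most
`v(X_k)`.
-/

section

open Finset

variable {ι α : Type*} [DecidableEq ι] {v : ι → ℝ}

def IsPairwiseEF1 (v : ι → ℝ) (X : α → Finset ι) : Prop :=
  ∀ i j, (X j).Nonempty → ∃ g ∈ X j, ∑ e ∈ X i, v e ≥ (∑ e ∈ X j, v e) - v g

lemma sum_insert_le_add (hv : ∀ j, 0 ≤ v j) (a : ι) (s : Finset ι) :
    ∑ e ∈ insert a s, v e ≤ v a + ∑ e ∈ s, v e := by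
  by_cases ha : a ∈ s
  · rw [insert_eq_of_mem ha]
    exact le_add_of_nonneg_left (hv a)
  · rw [sum_insert ha]

lemma sum_le_sum_update_insert_s11 [DecidableEq α] (hv : ∀ j, 0 ≤ v j) (X : α → Finset ι)
    (k : α) (a : ι) (i : α) :
    ∑ e ∈ X i, v e ≤ ∑ e ∈ Function.update X k (insert a (X k)) i, v e := by
  refine sum_le_sum_of_subset_of_nonneg ?_ fun j _ _ => hv j
  rcases eq_or_ne i k with rfl | hik
  · simpa only [Function.update_self] using subset_insert a (X i)
  · rw [Function.update_of_ne hik]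

theorem IsPairwiseEF1.update_insert_of_forall_le [DecidableEq α]
    (hv : ∀ j, 0 ≤ v j) {X : α → Finset ι} (hX : IsPairwiseEF1 v X) {k : α}
    (hmin : ∀ i, ∑ e ∈ X k, v e ≤ ∑ e ∈ X i, v e) (a : ι) :
    IsPairwiseEF1 v (Function.update X k (insert a (X k))) := by
  intro i j hne
  have hgrow := sum_le_sum_update_insert_s11 hv X k a
  rcases eq_or_ne j k with rfl | hjk
  · refine ⟨a, by simp, ?_⟩
    have := sum_insert_le_add hv a (X j)
    rw [Function.update_self]
    linarith [hmin i, hgrow i]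
  · rw [Function.update_of_ne hjk] at hne ⊢
    obtain ⟨g, hg, hgi⟩ := hX i j hne
    exact ⟨g, hg, (hgrow i).trans' hgi⟩

end

theorem stmt_11_general {ι : Type*} [DecidableEq ι] {n : ℕ} (v : ι → ℝ) (hv : ∀ j, 0 ≤ v j)
    (X : Fin n → Finset ι)
    (hEF1 : ∀ i j : Fin n, (X j).Nonempty →
      ∃ g ∈ X j, ∑ e ∈ X i, v e ≥ (∑ e ∈ X j, v e) - v g)
    (k : Fin n) (hmin : ∀ i : Fin n, ∑ e ∈ X k, v e ≤ ∑ e ∈ X i, v e)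
    (gstar : ι) :
    ∀ i j : Fin n,
      (Function.update X k (insert gstar (X k)) j).Nonempty →
      ∃ g ∈ Function.update X k (insert gstar (X k)) j,
        ∑ e ∈ Function.update X k (insert gstar (X k)) i, v e ≥
          (∑ e ∈ Function.update X k (insert gstar (X k)) j, v e) - v g :=
  IsPairwiseEF1.update_insert_of_forall_le hv hEF1 hmin gstar

/-- If `(X_1, …, X_n)` is pairwise EF1 (identical additive valuation) and an
item `g*` is added to a minimum-value bundle `X_k`, the new allocation is pairwise EF1. -/
theorem stmt_11 {ι : Type*} [DecidableEq ι] {n : ℕ} (v : ι → ℝ) (hv : ∀ j, 0 ≤ v j)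
    (X : Fin n → Finset ι)
    (hEF1 : ∀ i j : Fin n, (X j).Nonempty →
      ∃ g ∈ X j, ∑ e ∈ X i, v e ≥ (∑ e ∈ X j, v e) - v g)
    (k : Fin n) (hmin : ∀ i : Fin n, ∑ e ∈ X k, v e ≤ ∑ e ∈ X i, v e)
    (gstar : ι) (hg : ∀ i : Fin n, gstar ∉ X i) :
    ∀ i j : Fin n,
      (Function.update X k (insert gstar (X k)) j).Nonempty →
      ∃ g ∈ Function.update X k (insert gstar (X k)) j,
        ∑ e ∈ Function.update X k (insert gstar (X k)) i, v e ≥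
          (∑ e ∈ Function.update X k (insert gstar (X k)) j, v e) - v g :=
  stmt_11_general v hv X hEF1 k hmin gstar
end

section
/- Let X be a finite set of items with s(X) ≤ B where every item has size at most B/k⁴ for a real k ≥ 1. Let X' ⊆ X be obtained by removing items of minimum density from X until s(X') ≤ B − s_j for a given item size s_j ≤ B/k⁴. Then v(X') ≥ (1 − 2/k⁴)·v(X). More precisely: if Δ ⊆ X consists of the minimum-density items of X and s(X \ Δ) > (1 − 2/k⁴)·s(X) ≥ 0, and every item in Δ has density at most every item in X \ Δ, then v(X \ Δ) ≥ (s(X \ Δ)/s(X))·v(X) ≥ (1 − 2/k⁴)·v(X). -/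
/-!
Cross-multiplying the density comparison `v d / s d ≤ v a / s a` and summing over all pairs
gives `v(Δ) s(A) ≤ v(A) s(Δ)` for `A = X \ Δ`; adding `v(A) s(A)` turns this into
`s(A) v(X) ≤ v(A) s(X)`. The second bound then only uses `s(A) / s(X) ≥ 1 - 2/k⁴`.
-/

open Finset

section Density

variable {ι : Type*} (s v : ι → ℝ)

theorem sum_mul_sum_le_sum_mul_sum_of_div_le {A D : Finset ι}
    (hsA : ∀ a ∈ A, 0 < s a) (hsD : ∀ d ∈ D, 0 < s d)
    (hdense : ∀ d ∈ D, ∀ a ∈ A, v d / s d ≤ v a / s a) :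
    (∑ d ∈ D, v d) * ∑ a ∈ A, s a ≤ (∑ a ∈ A, v a) * ∑ d ∈ D, s d := by
  rw [sum_mul_sum, sum_mul_sum, sum_comm]
  refine sum_le_sum fun a ha => sum_le_sum fun d hd => ?_
  exact (div_le_div_iff₀ (hsD d hd) (hsA a ha)).1 (hdense d hd a ha)

theorem div_mul_sum_le_sum_sdiff_of_div_le [DecidableEq ι] {X Δ : Finset ι} (hΔX : Δ ⊆ X)
    (hs : ∀ j ∈ X, 0 < s j) (hdense : ∀ d ∈ Δ, ∀ a ∈ X \ Δ, v d / s d ≤ v a / s a) :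
    (∑ j ∈ X \ Δ, s j) / (∑ j ∈ X, s j) * ∑ j ∈ X, v j ≤ ∑ j ∈ X \ Δ, v j := by
  rcases (X \ Δ).eq_empty_or_nonempty with hA | hA
  · simp [hA]
  have hsX : 0 < ∑ j ∈ X, s j := sum_pos hs (hA.mono sdiff_subset)
  have hexchange := sum_mul_sum_le_sum_mul_sum_of_div_le s v
    (fun a ha => hs a (sdiff_subset ha)) (fun d hd => hs d (hΔX hd)) hdense
  rw [div_mul_eq_mul_div, div_le_iff₀ hsX, ← sum_sdiff hΔX (f := s), ← sum_sdiff hΔX (f := v)]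
  linarith

end Density

theorem stmt_15_general {ι : Type*} [DecidableEq ι] (s v : ι → ℝ) (k : ℝ)
    (X Δ : Finset ι) (hΔX : Δ ⊆ X)
    (hs : ∀ j, 0 < s j) (hv : ∀ j, 0 ≤ v j)
    (hdense : ∀ d ∈ Δ, ∀ a ∈ X \ Δ, v d / s d ≤ v a / s a)
    (hsize : ∑ j ∈ X \ Δ, s j > (1 - 2 / k ^ 4) * ∑ j ∈ X, s j)
    (hnn : (0 : ℝ) ≤ (1 - 2 / k ^ 4) * ∑ j ∈ X, s j) :
    (∑ j ∈ X \ Δ, v j) ≥ ((∑ j ∈ X \ Δ, s j) / ∑ j ∈ X, s j) * ∑ j ∈ X, v j ∧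
    (∑ j ∈ X \ Δ, v j) ≥ (1 - 2 / k ^ 4) * ∑ j ∈ X, v j := by
  have hsX : ∑ j ∈ X \ Δ, s j ≤ ∑ j ∈ X, s j :=
    sum_le_sum_of_subset_of_nonneg sdiff_subset fun j _ _ => (hs j).le
  have hkey := div_mul_sum_le_sum_sdiff_of_div_le s v hΔX (fun j _ => hs j) hdense
  have hratio : 1 - 2 / k ^ 4 ≤ (∑ j ∈ X \ Δ, s j) / ∑ j ∈ X, s j :=
    (le_div_iff₀ (by linarith)).2 hsize.le
  refine ⟨hkey, le_trans ?_ hkey⟩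
  exact mul_le_mul_of_nonneg_right hratio (sum_nonneg fun j _ => hv j)

/-- If `Δ ⊆ X` consists of minimum-density items of `X` (every item of `Δ` has
density at most every item of `X \ Δ`) and `s(X \ Δ) > (1 − 2/k⁴)·s(X) ≥ 0` with `k ≥ 1`,
then `v(X \ Δ) ≥ (s(X \ Δ)/s(X))·v(X) ≥ (1 − 2/k⁴)·v(X)`. -/
theorem stmt_15 {ι : Type*} [DecidableEq ι] (s v : ι → ℝ) (k : ℝ) (hk : 1 ≤ k)
    (X Δ : Finset ι) (hΔX : Δ ⊆ X)
    (hs : ∀ j, 0 < s j) (hv : ∀ j, 0 ≤ v j)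
    (hdense : ∀ d ∈ Δ, ∀ a ∈ X \ Δ, v d / s d ≤ v a / s a)
    (hsize : ∑ j ∈ X \ Δ, s j > (1 - 2 / k ^ 4) * ∑ j ∈ X, s j)
    (hnn : (0 : ℝ) ≤ (1 - 2 / k ^ 4) * ∑ j ∈ X, s j) :
    (∑ j ∈ X \ Δ, v j) ≥ ((∑ j ∈ X \ Δ, s j) / ∑ j ∈ X, s j) * ∑ j ∈ X, v j ∧
    (∑ j ∈ X \ Δ, v j) ≥ (1 - 2 / k ^ 4) * ∑ j ∈ X, v j :=
  stmt_15_general s v k X Δ hΔX hs hv hdense hsize hnn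
end
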